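/- Let (𝔤,ω,𝔞,N) be a finite-dimensional strongly polarized orthosymplectic quasi-Frobenius Lie superalgebra over 𝕂 (𝔞 a Lagrangian ideal, N a complementary Lagrangian subspace), and let (𝔥 = 𝔤/𝔞, ∇) be its associated quotient flat Lie superalgebra. Then there exists an even, super anti-symmetric 2-cocycle α : 𝔥 × 𝔥 → 𝔥* for the dual representation ρ, satisfying the cyclic condition (−1)^{p(u)p(w)}α(u,v)(w) + (−1)^{p(w)p(v)}α(w,u)(v) + (−1)^{p(v)p(u)}α(v,w)(u) = 0, such that the map Φ : 𝔤 = N ⊕ 𝔞 → 𝔥 ⊕ 𝔥*, given on N by the projection 𝔤 → 𝔥 and on 𝔞 by a ↦ i_ω(a) where i_ω(a)(u) = ω(a, ũ) for a lift ũ of u, is an isomorphism of Lie superalgebras onto the T*-extension 𝔤' = 𝔥 ⊕ 𝔥* (with bracket [u,v] = [u,v]_𝔥 + α(u,v), [u,ξ] = ρ(u)·ξ, [ξ,ζ] = 0) which carries ω to the form ω'(u+ξ, v+ζ) = ξ(v) − (−1)^{p(ζ)p(u)}ζ(u). -/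

import Mathlib

/-!
Lift `𝔥 = V ⧸ a` into `V` through the complement `N`. As `a` is Lagrangian, `ω` pairs `a`
perfectly with `𝔥`, so `Φ = (π, i_ω) : V → 𝔥 ⊕ 𝔥*` is a linear isomorphism; the bracket and the
form on `𝔥 ⊕ 𝔥*` are those of `V` transported along `Φ`, and it remains to compute them. On lifts,
the `𝔥*`-part of the bracket is `α(u, v) = i_ω [ũ, ṽ]`; for `p ∈ a` the defining identity of `∇`
gives `i_ω [ũ, p] = ±ρ(u)(i_ω p)`; and `[a, a] = 0` because `a` is a Lagrangian ideal and `ω` is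
closed. The cyclic condition on `α` is the closedness of `ω` on lifts, and the cocycle condition
is the `𝔥*`-component of the Jacobi identity. Parities are respected because in characteristic
`≠ 2` Lagrangian subspaces of an even super-skew form are graded, so the lift through `N`
preserves parity.
-/

noncomputable section

/-- The sign `(−1)^{ij}` for parities `i, j` encoded as booleans
(`false` = even, `true` = odd). -/
def ssign (K : Type*) [Field K] (i j : Bool) : K := if i && j then -1 else 1

section Defs

variable (K : Type*) [Field K]

/-- A map `f : V → V → W` is bilinear over `K`. -/
def IsBilinMap (V W : Type*) [AddCommGroup V] [Module K V] [AddCommGroup W] [Module K W]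
    (f : V → V → W) : Prop :=
  (∀ x y z : V, f (x + y) z = f x z + f y z) ∧
  (∀ (c : K) (x y : V), f (c • x) y = c • f x y) ∧
  (∀ x y z : V, f x (y + z) = f x y + f x z) ∧
  (∀ (c : K) (x y : V), f x (c • y) = c • f x y)

variable (V : Type*) [AddCommGroup V] [Module K V]

/-- A Lie superalgebra structure over `K` on the `ℤ/2`-graded space `V`,
with homogeneous components `sub false` (even part) and `sub true` (odd part),
and bracket `br`.  Includes super anti-commutativity, the super Jacobi identity,
and (when `char K = 3`) the extra cubic condition on odd elements. -/
structure IsLieSuperAlg (sub : Bool → Submodule K V) (br : V → V → V) : Prop where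
  compl : IsCompl (sub false) (sub true)
  bilin : IsBilinMap K V V br
  graded : ∀ i j : Bool, ∀ x ∈ sub i, ∀ y ∈ sub j, br x y ∈ sub (Bool.xor i j)
  antisymm : ∀ i j : Bool, ∀ x ∈ sub i, ∀ y ∈ sub j, br y x = -(ssign K i j • br x y)
  jacobi : ∀ i j k : Bool, ∀ x ∈ sub i, ∀ y ∈ sub j, ∀ z ∈ sub k,
    ssign K i k • br x (br y z) + ssign K j i • br y (br z x) + ssign K k j • br z (br x y) = 0
  jacobi3 : ringChar K = 3 → ∀ f ∈ sub true, br f (br f f) = 0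

/-- Graded anti-symmetry of a bilinear form: `ω(y,x) = -(-1)^{p(x)p(y)} ω(x,y)`. -/
def IsSuperSkew (sub : Bool → Submodule K V) (ω : V → V → K) : Prop :=
  ∀ i j : Bool, ∀ x ∈ sub i, ∀ y ∈ sub j, ω y x = -(ssign K i j * ω x y)

/-- Closedness (2-cocycle condition) of a bilinear form with respect to a bracket. -/
def IsClosedForm (sub : Bool → Submodule K V) (br : V → V → V) (ω : V → V → K) : Prop :=
  ∀ i j k : Bool, ∀ x ∈ sub i, ∀ y ∈ sub j, ∀ z ∈ sub k,
    ssign K i k * ω x (br y z) + ssign K k j * ω z (br x y) + ssign K j i * ω y (br z x) = 0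

/-- Non-degeneracy of a bilinear form. -/
def IsNondegForm (ω : V → V → K) : Prop := ∀ x : V, (∀ y : V, ω x y = 0) → x = 0

/-- A bilinear form is even if it vanishes on pairs of homogeneous elements
of opposite parity. -/
def IsEvenForm (sub : Bool → Submodule K V) (ω : V → V → K) : Prop :=
  ∀ x y : V, (x ∈ sub false ∧ y ∈ sub true) ∨ (x ∈ sub true ∧ y ∈ sub false) → ω x y = 0

/-- A bilinear form is odd if it vanishes on pairs of homogeneous elements
of the same parity. -/
def IsOddForm (sub : Bool → Submodule K V) (ω : V → V → K) : Prop :=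
  ∀ i : Bool, ∀ x ∈ sub i, ∀ y ∈ sub i, ω x y = 0

/-- `(𝔤, ω)` is quasi-Frobenius: `ω` is a closed anti-symmetric non-degenerate
bilinear form. -/
def IsQuasiFrobenius (sub : Bool → Submodule K V) (br : V → V → V) (ω : V → V → K) : Prop :=
  IsBilinMap K V K ω ∧ IsSuperSkew K V sub ω ∧ IsClosedForm K V sub br ω ∧ IsNondegForm K V ω

end Defs

/-- The grading on the dual space: `(𝔥*)_i = {ξ | ξ(𝔥_{1−i}) = 0}`. -/
def dualSub (K H : Type*) [Field K] [AddCommGroup H] [Module K H]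
    (sub : Bool → Submodule K H) (i : Bool) : Submodule K (Module.Dual K H) :=
  Submodule.dualAnnihilator (sub (!i))

section Signs

variable (K : Type*) [Field K]

@[simp] lemma ssign_false_left (j : Bool) : ssign K false j = 1 := rfl

@[simp] lemma ssign_false_right (i : Bool) : ssign K i false = 1 := by cases i <;> rfl

@[simp] lemma ssign_true_true : ssign K true true = -1 := rfl

lemma ssign_ne_zero (i j : Bool) : ssign K i j ≠ 0 := by cases i <;> cases j <;> simp

end Signs

namespace IsBilinMap

variable {K V W : Type*} [Field K] [AddCommGroup V] [Module K V] [AddCommGroup W] [Module K W]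
  {f : V → V → W}

def toLinearMap₂ (hf : IsBilinMap K V W f) : V →ₗ[K] V →ₗ[K] W :=
  LinearMap.mk₂ K f hf.1 hf.2.1 hf.2.2.1 hf.2.2.2

lemma map_neg_right (hf : IsBilinMap K V W f) (x y : V) : f x (-y) = -f x y :=
  (hf.toLinearMap₂ x).map_neg y

lemma comp {V' W' : Type*} [AddCommGroup V'] [Module K V'] [AddCommGroup W'] [Module K W']
    (hf : IsBilinMap K V W f) (g : V' →ₗ[K] V) (h : W →ₗ[K] W') :
    IsBilinMap K V' W' (fun x y => h (f (g x) (g y))) := by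
  refine ⟨?_, ?_, ?_, ?_⟩ <;> intros <;>
    simp only [map_add, map_smul, hf.1, hf.2.1, hf.2.2.1, hf.2.2.2]

end IsBilinMap

section GradedLinearAlgebra

variable {K V : Type*} [Field K] [AddCommGroup V] [Module K V] {sub : Bool → Submodule K V}

lemma exists_add_eq_of_isCompl (hc : IsCompl (sub false) (sub true)) (i : Bool) (x : V) :
    ∃ y ∈ sub i, ∃ z ∈ sub (!i), y + z = x := by
  obtain ⟨y, z, hy, hz, rfl⟩ := Submodule.codisjoint_iff_exists_add_eq.mp hc.codisjoint x
  cases i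
  · exact ⟨y, hy, z, hz, rfl⟩
  · exact ⟨z, hz, y, hy, add_comm z y⟩

lemma eq_zero_of_mem_of_mem_not (hc : IsCompl (sub false) (sub true)) {i : Bool} {x : V}
    (hx : x ∈ sub i) (hx' : x ∈ sub (!i)) : x = 0 := by
  cases i
  · exact Submodule.disjoint_def.mp hc.disjoint x hx hx'
  · exact Submodule.disjoint_def.mp hc.disjoint x hx' hx

def IsGradedSubmodule (sub : Bool → Submodule K V) (L : Submodule K V) : Prop :=
  ∀ i : Bool, ∀ x ∈ sub i, ∀ y ∈ sub (!i), x + y ∈ L → x ∈ L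

lemma IsGradedSubmodule.induction_on {L : Submodule K V} (hc : IsCompl (sub false) (sub true))
    (hL : IsGradedSubmodule sub L) {P : V → Prop} (hadd : ∀ x y, P x → P y → P (x + y))
    (hhom : ∀ i, ∀ x ∈ sub i, x ∈ L → P x) : ∀ x ∈ L, P x := by
  intro x hx
  obtain ⟨y, hy, z, hz, rfl⟩ := exists_add_eq_of_isCompl hc false x
  exact hadd y z (hhom false y hy (hL false y hy z hz hx))
    (hhom true z hz (hL true z hz y hy (by rwa [add_comm])))

lemma forall_of_forall_homogeneous (hc : IsCompl (sub false) (sub true)) {P : V → Prop}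
    (hadd : ∀ x y, P x → P y → P (x + y)) (hhom : ∀ i, ∀ x ∈ sub i, P x) (x : V) : P x :=
  IsGradedSubmodule.induction_on (L := ⊤) hc (fun _ _ _ _ _ _ => Submodule.mem_top) hadd
    (fun i x hx _ => hhom i x hx) x trivial

lemma IsGradedSubmodule.mem_of_add_mem (hc : IsCompl (sub false) (sub true))
    {A B : Submodule K V} (hA : IsGradedSubmodule sub A) (hB : IsGradedSubmodule sub B)
    (hAB : Disjoint A B) {i : Bool} {x y : V} (hx : x ∈ A) (hy : y ∈ B) (hxy : x + y ∈ sub i) :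
    x ∈ sub i := by
  obtain ⟨x', hx', x'', hx'', rfl⟩ := exists_add_eq_of_isCompl hc i x
  obtain ⟨y', hy', y'', hy'', rfl⟩ := exists_add_eq_of_isCompl hc i y
  have hx''A : x'' ∈ A := hA (!i) x'' hx'' x' (by simpa using hx') (by rwa [add_comm])
  have hy''B : y'' ∈ B := hB (!i) y'' hy'' y' (by simpa using hy') (by rwa [add_comm])
  have hsum : x'' + y'' = 0 := by
    refine eq_zero_of_mem_of_mem_not hc (i := !i) (add_mem hx'' hy'') ?_
    have : x'' + y'' = x' + x'' + (y' + y'') - (x' + y') := by abel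
    simpa [this] using sub_mem hxy (add_mem hx' hy')
  have hx''0 : x'' = 0 := Submodule.disjoint_def.mp hAB x'' hx''A
    (by rw [eq_neg_of_add_eq_zero_left hsum]; exact neg_mem hy''B)
  rwa [hx''0, add_zero]

end GradedLinearAlgebra

section Forms

variable {K V : Type*} [Field K] [AddCommGroup V] [Module K V] {sub : Bool → Submodule K V}
  {ω : V → V → K}

def IsLagrangian (ω : V → V → K) (L : Submodule K V) : Prop :=
  ∀ v : V, v ∈ L ↔ ∀ w ∈ L, ω v w = 0

lemma IsEvenForm.apply_eq_zero (hE : IsEvenForm K V sub ω) {i : Bool} {x y : V} (hx : x ∈ sub i)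
    (hy : y ∈ sub (!i)) : ω x y = 0 := by
  cases i
  · exact hE x y (Or.inl ⟨hx, hy⟩)
  · exact hE x y (Or.inr ⟨hx, hy⟩)

lemma IsNondegForm.eq_zero_of_forall_homogeneous (hc : IsCompl (sub false) (sub true))
    (hω : IsBilinMap K V K ω) (hnd : IsNondegForm K V ω) {x : V}
    (h : ∀ i, ∀ y ∈ sub i, ω x y = 0) : x = 0 :=
  hnd x (forall_of_forall_homogeneous hc (fun y z hy hz => by rw [hω.2.2.1, hy, hz, add_zero]) h)

lemma IsNondegForm.exists_apply_eq [FiniteDimensional K V] (hω : IsBilinMap K V K ω)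
    (hnd : IsNondegForm K V ω) (f : Module.Dual K V) : ∃ p, ∀ y, ω p y = f y := by
  have hinj : Function.Injective hω.toLinearMap₂ := by
    rw [← LinearMap.ker_eq_bot, LinearMap.ker_eq_bot']
    exact fun x hx => hnd x fun y => LinearMap.congr_fun hx y
  obtain ⟨p, hp⟩ := (LinearMap.injective_iff_surjective_of_finrank_eq_finrank
    Subspace.dual_finrank_eq.symm).mp hinj f
  exact ⟨p, LinearMap.congr_fun hp⟩

/-- Pairing `x + y ∈ L` with `w ∈ L` in both orders gives two relations between the even and the
odd contributions that differ by the sign `ssign true true = -1`; together they give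
`2 ω x w = 0`. -/
lemma IsLagrangian.isGradedSubmodule (hchar : ringChar K ≠ 2)
    (hc : IsCompl (sub false) (sub true)) (hω : IsBilinMap K V K ω)
    (hsk : IsSuperSkew K V sub ω) (hE : IsEvenForm K V sub ω) {L : Submodule K V}
    (hL : IsLagrangian ω L) : IsGradedSubmodule sub L := by
  intro i x hx y hy hxy
  refine (hL x).mpr fun w hw => ?_
  obtain ⟨w', hw', w'', hw'', rfl⟩ := exists_add_eq_of_isCompl hc i w
  have hy' : y ∈ sub (!i) := hy
  have hw'n : w' ∈ sub (!!i) := by simpa using hw'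
  have h1 := (hL _).mp hxy _ hw
  have h2 := (hL _).mp hw _ hxy
  rw [hω.1, hω.2.2.1, hω.2.2.1, hE.apply_eq_zero hx hw'', hE.apply_eq_zero hy' hw'n, add_zero,
    zero_add] at h1
  rw [hω.1, hω.2.2.1, hω.2.2.1, hE.apply_eq_zero hw' hy',
    hE.apply_eq_zero hw'' (by simpa using hx), add_zero, zero_add, hsk i i x hx w' hw', hsk (!i) (!i) y hy' w'' hw''] at h2
  have h3 : (2 : K) * ω x w' = 0 := by
    cases i <;> simp only [ssign_true_true, ssign_false_left, Bool.not_false, Bool.not_true] at h2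
    · linear_combination h1 - h2
    · linear_combination h1 + h2
  rw [hω.2.2.1, hE.apply_eq_zero hx hw'', add_zero]
  exact (mul_eq_zero.mp h3).resolve_left (Ring.two_ne_zero hchar)

end Forms

section LieSuperalgebra

variable {K V : Type*} [Field K] [AddCommGroup V] [Module K V] {sub : Bool → Submodule K V}
  {br : V → V → V} {ω : V → V → K} {a : Submodule K V}

/-- Closedness of `ω` on `(z, p, q)` kills the two terms pairing `a` with `[z, a] ⊆ a`. -/
lemma IsLagrangian.br_eq_zero_of_isIdeal (hLie : IsLieSuperAlg K V sub br)
    (hQF : IsQuasiFrobenius K V sub br ω) (haIdeal : ∀ g : V, ∀ p ∈ a, br g p ∈ a ∧ br p g ∈ a)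
    (haLag : IsLagrangian ω a) (haGr : IsGradedSubmodule sub a) {p q : V} (hp : p ∈ a)
    (hq : q ∈ a) : br p q = 0 := by
  obtain ⟨hω, hsk, hcl, hnd⟩ := hQF
  have hhom : ∀ m, ∀ p ∈ sub m, p ∈ a → ∀ l, ∀ q ∈ sub l, q ∈ a → br p q = 0 := by
    intro m p hpm hp l q hql hq
    refine hnd.eq_zero_of_forall_homogeneous hLie.compl hω fun k z hz => ?_
    have hzpq := hcl k m l z hz p hpm q hql
    rw [(haLag q).mp hq _ (haIdeal z p hp).1, (haLag p).mp hp _ (haIdeal z q hq).2, mul_zero,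
      mul_zero, add_zero, add_zero] at hzpq
    rw [hsk k _ z hz _ (hLie.graded m l p hpm q hql),
      (mul_eq_zero.mp hzpq).resolve_left (ssign_ne_zero K k l), mul_zero, neg_zero]
  refine haGr.induction_on hLie.compl (P := fun p => br p q = 0)
    (fun x y hx hy => by rw [hLie.bilin.1, hx, hy, add_zero]) (fun m p hpm hp => ?_) p hp
  exact haGr.induction_on hLie.compl (P := fun q => br p q = 0)
    (fun x y hx hy => by rw [hLie.bilin.2.2.1, hx, hy, add_zero])
    (fun l q hql hq => hhom m p hpm hp l q hql hq) q hq

lemma IsLieSuperAlg.bracket_mem_map_mkQ (hLie : IsLieSuperAlg K V sub br)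
    {brH : (V ⧸ a) → (V ⧸ a) → (V ⧸ a)}
    (hbrH : ∀ x y : V, brH (a.mkQ x) (a.mkQ y) = a.mkQ (br x y)) {i j : Bool} {u v : V ⧸ a}
    (hu : u ∈ (sub i).map a.mkQ) (hv : v ∈ (sub j).map a.mkQ) :
    brH u v ∈ (sub (Bool.xor i j)).map a.mkQ := by
  obtain ⟨x, hx, rfl⟩ := hu
  obtain ⟨y, hy, rfl⟩ := hv
  exact ⟨br x y, hLie.graded i j x hx y hy, (hbrH x y).symm⟩

end LieSuperalgebra

section QuotientSection

variable {K V : Type*} [Field K] [AddCommGroup V] [Module K V] {a N : Submodule K V}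

lemma Submodule.mkQ_eq_zero_iff {x : V} : a.mkQ x = 0 ↔ x ∈ a := Submodule.Quotient.mk_eq_zero a

def quotSection (h : IsCompl a N) : V ⧸ a →ₗ[K] V :=
  N.subtype ∘ₗ (a.quotientEquivOfIsCompl N h).toLinearMap

lemma quotSection_mem (h : IsCompl a N) (u : V ⧸ a) : quotSection h u ∈ N :=
  (a.quotientEquivOfIsCompl N h u).2

@[simp] lemma mkQ_quotSection (h : IsCompl a N) (u : V ⧸ a) : a.mkQ (quotSection h u) = u :=
  a.mk_quotientEquivOfIsCompl_apply h u

lemma quotSection_mkQ_of_mem (h : IsCompl a N) {n : V} (hn : n ∈ N) :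
    quotSection h (a.mkQ n) = n :=
  congrArg Subtype.val (a.quotientEquivOfIsCompl_apply_mk_right h ⟨n, hn⟩)

lemma quotSection_mkQ_sub_mem (h : IsCompl a N) (t : V) : quotSection h (a.mkQ t) - t ∈ a :=
  Submodule.mkQ_eq_zero_iff.mp (by rw [map_sub, mkQ_quotSection, sub_self])

lemma quotSection_mem_sub {sub : Bool → Submodule K V} (hc : IsCompl (sub false) (sub true))
    (haGr : IsGradedSubmodule sub a) (hNGr : IsGradedSubmodule sub N) (h : IsCompl a N)
    {i : Bool} {u : V ⧸ a} (hu : u ∈ (sub i).map a.mkQ) : quotSection h u ∈ sub i := by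
  obtain ⟨x, hx, rfl⟩ := hu
  obtain ⟨n, p, hn, hp, rfl⟩ := Submodule.codisjoint_iff_exists_add_eq.mp h.symm.codisjoint x
  have hmk : a.mkQ (n + p) = a.mkQ n := by
    rw [map_add, Submodule.mkQ_eq_zero_iff.mpr hp, add_zero]
  rw [hmk, quotSection_mkQ_of_mem h hn]
  exact hNGr.mem_of_add_mem hc haGr h.symm.disjoint hn hp hx

end QuotientSection

structure IsStrongPolarization (K V : Type*) [Field K] [AddCommGroup V] [Module K V]
    (sub : Bool → Submodule K V) (br : V → V → V) (ω : V → V → K) (a N : Submodule K V) :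
    Prop where
  lie : IsLieSuperAlg K V sub br
  quasiFrobenius : IsQuasiFrobenius K V sub br ω
  even : IsEvenForm K V sub ω
  isCompl : IsCompl a N
  isIdeal : ∀ g : V, ∀ p ∈ a, br g p ∈ a ∧ br p g ∈ a
  isLagrangian_left : IsLagrangian ω a
  isLagrangian_right : IsLagrangian ω N

/-- `pairing` is `ω_𝔥(∇_u v, c) = −(−1)^{p(u)p(v)} ω(ṽ, [ũ, c])`, with `z` a lift of `∇_u v`. -/
structure IsQuotientConnection {K V : Type*} [Field K] [AddCommGroup V] [Module K V]
    (sub : Bool → Submodule K V) (br : V → V → V) (ω : V → V → K) (a : Submodule K V)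
    (conn : (V ⧸ a) →ₗ[K] (V ⧸ a) →ₗ[K] (V ⧸ a)) : Prop where
  graded : ∀ i j : Bool, ∀ u ∈ (sub i).map a.mkQ, ∀ v ∈ (sub j).map a.mkQ,
    conn u v ∈ (sub (Bool.xor i j)).map a.mkQ
  pairing : ∀ (i j : Bool) (u v : V), u ∈ sub i → v ∈ sub j →
    ∀ z : V, a.mkQ z = conn (a.mkQ u) (a.mkQ v) →
      ∀ c ∈ a, ω z c = -(ssign K i j * ω v (br u c))

namespace IsStrongPolarization

variable {K V : Type*} [Field K] [AddCommGroup V] [Module K V] {sub : Bool → Submodule K V}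
  {br : V → V → V} {ω : V → V → K} {a N : Submodule K V}
  (P : IsStrongPolarization K V sub br ω a N)
  {conn : (V ⧸ a) →ₗ[K] (V ⧸ a) →ₗ[K] (V ⧸ a)}

lemma isGradedSubmodule_left (P : IsStrongPolarization K V sub br ω a N)
    (hchar : ringChar K ≠ 2) : IsGradedSubmodule sub a :=
  P.isLagrangian_left.isGradedSubmodule hchar P.lie.compl P.quasiFrobenius.1
    P.quasiFrobenius.2.1 P.even

lemma isGradedSubmodule_right (P : IsStrongPolarization K V sub br ω a N)
    (hchar : ringChar K ≠ 2) : IsGradedSubmodule sub N :=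
  P.isLagrangian_right.isGradedSubmodule hchar P.lie.compl P.quasiFrobenius.1
    P.quasiFrobenius.2.1 P.even

lemma quotSection_mem_sub (hchar : ringChar K ≠ 2) {i : Bool} {u : V ⧸ a}
    (hu : u ∈ (sub i).map a.mkQ) : quotSection P.isCompl u ∈ sub i :=
  _root_.quotSection_mem_sub P.lie.compl (P.isGradedSubmodule_left hchar)
    (P.isGradedSubmodule_right hchar) P.isCompl hu

lemma br_eq_zero (P : IsStrongPolarization K V sub br ω a N) (hchar : ringChar K ≠ 2)
    {p q : V} (hp : p ∈ a) (hq : q ∈ a) : br p q = 0 :=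
  P.isLagrangian_left.br_eq_zero_of_isIdeal P.lie P.quasiFrobenius P.isIdeal
    (P.isGradedSubmodule_left hchar) hp hq

/-- The paper's `i_ω`, extended from `a` to `V` by lifting through `N`; on `a` the choice of
lift does not matter (`iω_mkQ_of_mem`). -/
def iω : V →ₗ[K] Module.Dual K (V ⧸ a) :=
  P.quasiFrobenius.1.toLinearMap₂.compl₂ (quotSection P.isCompl)

lemma iω_apply (x : V) (u : V ⧸ a) : P.iω x u = ω x (quotSection P.isCompl u) := rfl

lemma iω_mkQ_of_mem {p : V} (hp : p ∈ a) (t : V) : P.iω p (a.mkQ t) = ω p t := by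
  rw [iω_apply, ← sub_add_cancel (quotSection P.isCompl (a.mkQ t)) t, P.quasiFrobenius.1.2.2.1,
    (P.isLagrangian_left p).mp hp _ (quotSection_mkQ_sub_mem P.isCompl t), zero_add]

lemma iω_eq_zero_of_mem {n : V} (hn : n ∈ N) : P.iω n = 0 :=
  LinearMap.ext fun u => (P.isLagrangian_right n).mp hn _ (quotSection_mem P.isCompl u)

lemma exists_mem_iω_eq [FiniteDimensional K V] (ξ : Module.Dual K (V ⧸ a)) :
    ∃ p ∈ a, P.iω p = ξ := by
  obtain ⟨p, hp⟩ := P.quasiFrobenius.2.2.2.exists_apply_eq P.quasiFrobenius.1 (ξ ∘ₗ a.mkQ)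
  have hpa : p ∈ a := (P.isLagrangian_left p).mpr fun w hw => by
    rw [hp, LinearMap.comp_apply, Submodule.mkQ_eq_zero_iff.mpr hw, map_zero]
  refine ⟨p, hpa, LinearMap.ext fun u => ?_⟩
  obtain ⟨t, rfl⟩ := a.mkQ_surjective u
  rw [P.iω_mkQ_of_mem hpa, hp, LinearMap.comp_apply]

lemma bijective_mkQ_prod_iω [FiniteDimensional K V] : Function.Bijective (a.mkQ.prod P.iω) := by
  refine ⟨?_, ?_⟩
  · rw [← LinearMap.ker_eq_bot, LinearMap.ker_eq_bot']
    intro x hx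
    have hxa : x ∈ a := Submodule.mkQ_eq_zero_iff.mp (congrArg Prod.fst hx)
    refine P.quasiFrobenius.2.2.2 x fun y => ?_
    rw [← P.iω_mkQ_of_mem hxa y]
    exact LinearMap.congr_fun (congrArg Prod.snd hx) _
  · rintro ⟨u, ξ⟩
    obtain ⟨p, hp, hpξ⟩ := P.exists_mem_iω_eq (ξ - P.iω (quotSection P.isCompl u))
    refine ⟨quotSection P.isCompl u + p, Prod.ext ?_ ?_⟩
    · show a.mkQ (quotSection P.isCompl u + p) = u
      rw [map_add, mkQ_quotSection, Submodule.mkQ_eq_zero_iff.mpr hp, add_zero]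
    · simp [hpξ]

lemma mem_sub_of_iω_mem_dualSub {j : Bool} {p : V} (hp : p ∈ a)
    (hξ : P.iω p ∈ dualSub K (V ⧸ a) (fun i => (sub i).map a.mkQ) j) : p ∈ sub j := by
  obtain ⟨hω, -, -, hnd⟩ := P.quasiFrobenius
  obtain ⟨p', hp', p'', hp'', rfl⟩ := exists_add_eq_of_isCompl P.lie.compl j p
  suffices p'' = 0 by rwa [this, add_zero]
  refine hnd.eq_zero_of_forall_homogeneous P.lie.compl hω fun k z hz => ?_
  obtain rfl | rfl : k = !j ∨ k = j := by cases k <;> cases j <;> simp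
  · have hz0 : P.iω (p' + p'') (a.mkQ z) = 0 :=
      (Submodule.mem_dualAnnihilator _).mp hξ _ ⟨z, hz, rfl⟩
    rwa [P.iω_mkQ_of_mem hp, hω.1, P.even.apply_eq_zero hp' hz, zero_add] at hz0
  · exact P.even.apply_eq_zero hp'' (by simpa using hz)


lemma iω_br_of_mem (hconn : IsQuotientConnection sub br ω a conn) {i m : Bool} {x p : V}
    (hx : x ∈ sub i) (hp : p ∈ a) (hpm : p ∈ sub m) :
    P.iω (br x p) = -(ssign K i m) • (P.iω p).comp (conn (a.mkQ x)) := by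
  obtain ⟨-, hsk, -, -⟩ := P.quasiFrobenius
  refine LinearMap.ext fun u => ?_
  obtain ⟨t, rfl⟩ := a.mkQ_surjective u
  revert t
  refine forall_of_forall_homogeneous P.lie.compl
    (fun t t' ht ht' => by simp only [map_add, ht, ht']) fun k t ht => ?_
  obtain ⟨z, hz, hzt⟩ := hconn.graded i k _ ⟨x, hx, rfl⟩ _ ⟨t, ht, rfl⟩
  rw [LinearMap.smul_apply, LinearMap.comp_apply, ← hzt, P.iω_mkQ_of_mem (P.isIdeal x p hp).1,
    P.iω_mkQ_of_mem hp, hsk _ m z hz p hpm, hconn.pairing i k x t hx ht z hzt p hp,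
    hsk _ k _ (P.lie.graded i m x hx p hpm) t ht]
  cases i <;> cases m <;> cases k <;> simp

lemma iω_br_of_mem_left (hconn : IsQuotientConnection sub br ω a conn) {i m : Bool} {x p : V}
    (hx : x ∈ sub i) (hp : p ∈ a) (hpm : p ∈ sub m) :
    P.iω (br p x) = (P.iω p).comp (conn (a.mkQ x)) := by
  rw [P.lie.antisymm i m x hx p hpm, map_neg, map_smul, P.iω_br_of_mem hconn hx hp hpm, smul_smul]
  cases i <;> cases m <;> simp

def cocycle (u v : V ⧸ a) : Module.Dual K (V ⧸ a) :=
  P.iω (br (quotSection P.isCompl u) (quotSection P.isCompl v))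

lemma cocycle_isBilinMap : IsBilinMap K (V ⧸ a) (Module.Dual K (V ⧸ a)) P.cocycle :=
  P.lie.bilin.comp (quotSection P.isCompl) P.iω

lemma cocycle_mem_dualSub (hchar : ringChar K ≠ 2) {i j : Bool} {u v : V ⧸ a}
    (hu : u ∈ (sub i).map a.mkQ) (hv : v ∈ (sub j).map a.mkQ) :
    P.cocycle u v ∈ dualSub K (V ⧸ a) (fun i => (sub i).map a.mkQ) (Bool.xor i j) := by
  refine (Submodule.mem_dualAnnihilator _).mpr ?_
  rintro _ ⟨t, ht, rfl⟩
  exact P.even.apply_eq_zero (P.lie.graded i j _ (P.quotSection_mem_sub hchar hu) _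
    (P.quotSection_mem_sub hchar hv)) (P.quotSection_mem_sub hchar ⟨t, ht, rfl⟩)

lemma cocycle_swap (hchar : ringChar K ≠ 2) {i j : Bool} {u v : V ⧸ a}
    (hu : u ∈ (sub i).map a.mkQ) (hv : v ∈ (sub j).map a.mkQ) :
    P.cocycle v u = -(ssign K i j • P.cocycle u v) := by
  rw [cocycle, P.lie.antisymm i j _ (P.quotSection_mem_sub hchar hu) _
    (P.quotSection_mem_sub hchar hv), map_neg, map_smul, cocycle]

lemma cocycle_cyclic (hchar : ringChar K ≠ 2) {i j k : Bool} {u v w : V ⧸ a}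
    (hu : u ∈ (sub i).map a.mkQ) (hv : v ∈ (sub j).map a.mkQ) (hw : w ∈ (sub k).map a.mkQ) :
    ssign K i k * P.cocycle u v w + ssign K k j * P.cocycle w u v
      + ssign K j i * P.cocycle v w u = 0 := by
  obtain ⟨-, hsk, hcl, -⟩ := P.quasiFrobenius
  have hx := P.quotSection_mem_sub hchar hu
  have hy := P.quotSection_mem_sub hchar hv
  have hz := P.quotSection_mem_sub hchar hw
  have h := hcl i j k _ hx _ hy _ hz
  rw [hsk _ i _ (P.lie.graded j k _ hy _ hz) _ hx, hsk _ k _ (P.lie.graded i j _ hx _ hy) _ hz,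
    hsk _ j _ (P.lie.graded k i _ hz _ hx) _ hy] at h
  simp only [cocycle, iω_apply]
  cases i <;> cases j <;> cases k <;>
    simp only [ssign_true_true, ssign_false_left, ssign_false_right, Bool.true_xor,
      Bool.false_xor, Bool.not_true, Bool.not_false] at h ⊢ <;>
    first | linear_combination h | linear_combination -h

/-- Write `[ṽ, w̃] = ([v, w])~ + d` with `d ∈ a` and evaluate `[ũ, d]` through `∇`. -/
lemma iω_br_br (hchar : ringChar K ≠ 2) (hconn : IsQuotientConnection sub br ω a conn)
    {brH : (V ⧸ a) → (V ⧸ a) → (V ⧸ a)}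
    (hbrH : ∀ x y : V, brH (a.mkQ x) (a.mkQ y) = a.mkQ (br x y)) {i j k : Bool} {u v w : V ⧸ a}
    (hu : u ∈ (sub i).map a.mkQ) (hv : v ∈ (sub j).map a.mkQ) (hw : w ∈ (sub k).map a.mkQ) :
    P.iω (br (quotSection P.isCompl u) (br (quotSection P.isCompl v) (quotSection P.isCompl w)))
      = P.cocycle u (brH v w)
        - ssign K i (Bool.xor j k) • (P.cocycle v w).comp (conn u) := by
  obtain ⟨d, hda, hdjk, hsplit⟩ : ∃ d ∈ a, d ∈ sub (Bool.xor j k) ∧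
      br (quotSection P.isCompl v) (quotSection P.isCompl w)
        = quotSection P.isCompl (brH v w) + d := by
    refine ⟨_, Submodule.mkQ_eq_zero_iff.mp ?_, sub_mem (P.lie.graded j k _
      (P.quotSection_mem_sub hchar hv) _ (P.quotSection_mem_sub hchar hw))
      (P.quotSection_mem_sub hchar (P.lie.bracket_mem_map_mkQ hbrH hv hw)),
      (add_sub_cancel _ _).symm⟩
    rw [map_sub, mkQ_quotSection, ← hbrH, mkQ_quotSection, mkQ_quotSection, sub_self]
  have hd : P.iω d = P.cocycle v w := by
    rw [cocycle, hsplit, map_add, P.iω_eq_zero_of_mem (quotSection_mem _ _), zero_add]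
  rw [hsplit, P.lie.bilin.2.2.1, map_add, P.iω_br_of_mem hconn (P.quotSection_mem_sub hchar hu)
    hda hdjk, hd, mkQ_quotSection, sub_eq_add_neg]
  -- `rw [neg_smul]` does not match the scalar action on `V ⧸ a →ₗ[K] K` here
  exact congrArg₂ (· + ·) rfl
    (neg_smul (ssign K i (Bool.xor j k)) ((P.cocycle v w).comp (conn u)))

/-- The `𝔥*`-component of the super Jacobi identity for `ũ, ṽ, w̃`. -/
lemma cocycle_isCocycle (hchar : ringChar K ≠ 2) (hconn : IsQuotientConnection sub br ω a conn)
    {brH : (V ⧸ a) → (V ⧸ a) → (V ⧸ a)}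
    (hbrH : ∀ x y : V, brH (a.mkQ x) (a.mkQ y) = a.mkQ (br x y)) {i j k : Bool} {u v w : V ⧸ a}
    (hu : u ∈ (sub i).map a.mkQ) (hv : v ∈ (sub j).map a.mkQ) (hw : w ∈ (sub k).map a.mkQ) :
    -(ssign K i (Bool.xor j k)) • ((P.cocycle v w).comp (conn u))
      - ssign K i j • (-(ssign K j (Bool.xor i k)) • ((P.cocycle u w).comp (conn v)))
      + (ssign K k i * ssign K k j) •
          (-(ssign K k (Bool.xor i j)) • ((P.cocycle u v).comp (conn w)))
      - P.cocycle (brH u v) w + ssign K j k • P.cocycle (brH u w) v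
      + P.cocycle u (brH v w) = 0 := by
  have hσu := P.quotSection_mem_sub hchar hu
  have hσw := P.quotSection_mem_sub hchar hw
  have hjac := congrArg P.iω (P.lie.jacobi i j k _ hσu _ (P.quotSection_mem_sub hchar hv) _ hσw)
  rw [P.lie.antisymm i k _ hσu _ hσw, P.lie.bilin.map_neg_right, P.lie.bilin.2.2.2] at hjac
  simp only [map_add, map_smul, map_neg, map_zero] at hjac
  rw [P.iω_br_br hchar hconn hbrH hu hv hw, P.iω_br_br hchar hconn hbrH hv hu hw,
    P.iω_br_br hchar hconn hbrH hw hu hv,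
    P.cocycle_swap hchar (P.lie.bracket_mem_map_mkQ hbrH hu hw) hv,
    P.cocycle_swap hchar (P.lie.bracket_mem_map_mkQ hbrH hu hv) hw] at hjac
  cases i <;> cases j <;> cases k <;>
    simp only [ssign_true_true, ssign_false_left, ssign_false_right, Bool.true_xor,
      Bool.false_xor, Bool.not_true, Bool.not_false] at hjac ⊢ <;>
    first
      | linear_combination (norm := module) hjac
      | linear_combination (norm := module) -hjac

section FiniteDimensional

variable [FiniteDimensional K V]

/-- `Φ = (π, i_ω)`. -/
def equiv : V ≃ₗ[K] (V ⧸ a) × Module.Dual K (V ⧸ a) :=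
  LinearEquiv.ofBijective _ P.bijective_mkQ_prod_iω

lemma equiv_apply (x : V) : P.equiv x = (a.mkQ x, P.iω x) := rfl

lemma equiv_symm_mk_zero (u : V ⧸ a) : P.equiv.symm (u, 0) = quotSection P.isCompl u := by
  rw [LinearEquiv.symm_apply_eq, equiv_apply, mkQ_quotSection,
    P.iω_eq_zero_of_mem (quotSection_mem _ u)]

lemma equiv_symm_zero_mk_mem (ξ : Module.Dual K (V ⧸ a)) : P.equiv.symm (0, ξ) ∈ a :=
  Submodule.mkQ_eq_zero_iff.mp (congrArg Prod.fst (P.equiv.apply_symm_apply (0, ξ)))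

lemma iω_equiv_symm_zero_mk (ξ : Module.Dual K (V ⧸ a)) : P.iω (P.equiv.symm (0, ξ)) = ξ :=
  congrArg Prod.snd (P.equiv.apply_symm_apply (0, ξ))

lemma equiv_symm_zero_mk_mem_sub {j : Bool} {ξ : Module.Dual K (V ⧸ a)}
    (hξ : ξ ∈ dualSub K (V ⧸ a) (fun i => (sub i).map a.mkQ) j) : P.equiv.symm (0, ξ) ∈ sub j :=
  P.mem_sub_of_iω_mem_dualSub (P.equiv_symm_zero_mk_mem ξ) (by rwa [iω_equiv_symm_zero_mk])

def tstarBracket (X Y : (V ⧸ a) × Module.Dual K (V ⧸ a)) : (V ⧸ a) × Module.Dual K (V ⧸ a) :=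
  P.equiv (br (P.equiv.symm X) (P.equiv.symm Y))

def tstarForm (X Y : (V ⧸ a) × Module.Dual K (V ⧸ a)) : K :=
  ω (P.equiv.symm X) (P.equiv.symm Y)

lemma tstarBracket_isBilinMap :
    IsBilinMap K ((V ⧸ a) × Module.Dual K (V ⧸ a)) ((V ⧸ a) × Module.Dual K (V ⧸ a))
      P.tstarBracket :=
  P.lie.bilin.comp P.equiv.symm.toLinearMap P.equiv.toLinearMap

lemma tstarForm_isBilinMap : IsBilinMap K ((V ⧸ a) × Module.Dual K (V ⧸ a)) K P.tstarForm :=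
  P.quasiFrobenius.1.comp P.equiv.symm.toLinearMap LinearMap.id

lemma equiv_br (x y : V) : P.equiv (br x y) = P.tstarBracket (P.equiv x) (P.equiv y) := by
  simp only [tstarBracket, LinearEquiv.symm_apply_apply]

lemma tstarForm_equiv (x y : V) : P.tstarForm (P.equiv x) (P.equiv y) = ω x y := by
  simp only [tstarForm, LinearEquiv.symm_apply_apply]

lemma tstarBracket_mk_zero_mk_zero {brH : (V ⧸ a) → (V ⧸ a) → (V ⧸ a)}
    (hbrH : ∀ x y : V, brH (a.mkQ x) (a.mkQ y) = a.mkQ (br x y)) (u v : V ⧸ a) :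
    P.tstarBracket (u, 0) (v, 0) = (brH u v, P.cocycle u v) := by
  rw [tstarBracket, equiv_symm_mk_zero, equiv_symm_mk_zero, equiv_apply, ← hbrH, mkQ_quotSection,
    mkQ_quotSection, cocycle]

lemma tstarBracket_mk_zero_zero_mk (hchar : ringChar K ≠ 2)
    (hconn : IsQuotientConnection sub br ω a conn) {i j : Bool} {u : V ⧸ a}
    {ξ : Module.Dual K (V ⧸ a)} (hu : u ∈ (sub i).map a.mkQ)
    (hξ : ξ ∈ dualSub K (V ⧸ a) (fun i => (sub i).map a.mkQ) j) :
    P.tstarBracket (u, 0) (0, ξ) = (0, -(ssign K i j) • ξ.comp (conn u)) := by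
  have hp := P.equiv_symm_zero_mk_mem ξ
  rw [tstarBracket, equiv_symm_mk_zero, equiv_apply,
    Submodule.mkQ_eq_zero_iff.mpr (P.isIdeal _ _ hp).1,
    P.iω_br_of_mem hconn (P.quotSection_mem_sub hchar hu) hp (P.equiv_symm_zero_mk_mem_sub hξ),
    iω_equiv_symm_zero_mk, mkQ_quotSection]

lemma tstarBracket_zero_mk_mk_zero (hchar : ringChar K ≠ 2)
    (hconn : IsQuotientConnection sub br ω a conn) {i j : Bool} {u : V ⧸ a}
    {ξ : Module.Dual K (V ⧸ a)} (hu : u ∈ (sub i).map a.mkQ)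
    (hξ : ξ ∈ dualSub K (V ⧸ a) (fun i => (sub i).map a.mkQ) j) :
    P.tstarBracket (0, ξ) (u, 0) = (0, ξ.comp (conn u)) := by
  have hp := P.equiv_symm_zero_mk_mem ξ
  rw [tstarBracket, equiv_symm_mk_zero, equiv_apply,
    Submodule.mkQ_eq_zero_iff.mpr (P.isIdeal _ _ hp).2,
    P.iω_br_of_mem_left hconn (P.quotSection_mem_sub hchar hu) hp
      (P.equiv_symm_zero_mk_mem_sub hξ), iω_equiv_symm_zero_mk, mkQ_quotSection]

lemma tstarBracket_zero_mk_zero_mk (hchar : ringChar K ≠ 2) (ξ ζ : Module.Dual K (V ⧸ a)) :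
    P.tstarBracket (0, ξ) (0, ζ) = 0 := by
  rw [tstarBracket, P.br_eq_zero hchar (P.equiv_symm_zero_mk_mem ξ) (P.equiv_symm_zero_mk_mem ζ),
    map_zero]

lemma tstarForm_apply (hchar : ringChar K ≠ 2) {i j' : Bool} {u v : V ⧸ a}
    {ξ ζ : Module.Dual K (V ⧸ a)} (hu : u ∈ (sub i).map a.mkQ)
    (hζ : ζ ∈ dualSub K (V ⧸ a) (fun i => (sub i).map a.mkQ) j') :
    P.tstarForm (u, ξ) (v, ζ) = ξ v - ssign K j' i * ζ u := by
  obtain ⟨hω, hsk, -, -⟩ := P.quasiFrobenius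
  have hsplit : ∀ (w : V ⧸ a) (η : Module.Dual K (V ⧸ a)),
      P.equiv.symm (w, η) = quotSection P.isCompl w + P.equiv.symm (0, η) := fun w η => by
    rw [← equiv_symm_mk_zero, ← map_add, Prod.mk_add_mk, add_zero, zero_add]
  have hp := P.equiv_symm_zero_mk_mem ξ
  have hq := P.equiv_symm_zero_mk_mem ζ
  rw [tstarForm, hsplit u ξ, hsplit v ζ, hω.1, hω.2.2.1, hω.2.2.1,
    (P.isLagrangian_right _).mp (quotSection_mem _ u) _ (quotSection_mem _ v),
    (P.isLagrangian_left _).mp hp _ hq,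
    hsk _ _ _ (P.equiv_symm_zero_mk_mem_sub hζ) _ (P.quotSection_mem_sub hchar hu)]
  have hξv : ω (P.equiv.symm (0, ξ)) (quotSection P.isCompl v) = ξ v := by
    rw [← P.iω_apply, iω_equiv_symm_zero_mk]
  have hζu : ω (P.equiv.symm (0, ζ)) (quotSection P.isCompl u) = ζ u := by
    rw [← P.iω_apply, iω_equiv_symm_zero_mk]
  rw [hξv, hζu]
  ring

end FiniteDimensional

end IsStrongPolarization

theorem tstar_extension_converse_general
    (K V : Type*) [Field K] [AddCommGroup V] [Module K V] [FiniteDimensional K V]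
    (hchar : ringChar K ≠ 2)
    (sub : Bool → Submodule K V) (br : V → V → V) (ω : V → V → K)
    (hLie : IsLieSuperAlg K V sub br)
    (hQF : IsQuasiFrobenius K V sub br ω)
    (hEven : IsEvenForm K V sub ω)
    -- the strong polarization (𝔞, N)
    (a N : Submodule K V)
    (hcompl : IsCompl a N)
    (haIdeal : ∀ g : V, ∀ p ∈ a, br g p ∈ a ∧ br p g ∈ a)
    (haLag : ∀ v : V, v ∈ a ↔ ∀ w ∈ a, ω v w = 0)
    (hNLag : ∀ v : V, v ∈ N ↔ ∀ w ∈ N, ω v w = 0)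
    -- the quotient Lie superalgebra 𝔥 = 𝔤/𝔞 with the induced grading and bracket
    (brH : (V ⧸ a) → (V ⧸ a) → (V ⧸ a))
    (hbrH : ∀ x y : V, brH (a.mkQ x) (a.mkQ y) = a.mkQ (br x y))
    -- the associated flat torsion-free connection ∇ on 𝔥
    (conn : (V ⧸ a) →ₗ[K] (V ⧸ a) →ₗ[K] (V ⧸ a))
    (hgr : ∀ i j : Bool, ∀ u ∈ (sub i).map a.mkQ, ∀ v ∈ (sub j).map a.mkQ,
      conn u v ∈ (sub (Bool.xor i j)).map a.mkQ)
    (hconn : ∀ (i j : Bool) (u v : V), u ∈ sub i → v ∈ sub j →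
      ∀ z : V, a.mkQ z = conn (a.mkQ u) (a.mkQ v) →
        ∀ c ∈ a, ω z c = -(ssign K i j * ω v (br u c))) :
    ∃ (α : (V ⧸ a) → (V ⧸ a) → Module.Dual K (V ⧸ a))
      (brG : (V ⧸ a) × Module.Dual K (V ⧸ a) → (V ⧸ a) × Module.Dual K (V ⧸ a) →
        (V ⧸ a) × Module.Dual K (V ⧸ a))
      (ωG : (V ⧸ a) × Module.Dual K (V ⧸ a) → (V ⧸ a) × Module.Dual K (V ⧸ a) → K)
      (Φ : V → (V ⧸ a) × Module.Dual K (V ⧸ a)),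
      -- α is an even super anti-symmetric 2-cocycle for the dual representation,
      -- satisfying the cyclic condition
      IsBilinMap K (V ⧸ a) (Module.Dual K (V ⧸ a)) α
      ∧ (∀ i j : Bool, ∀ u ∈ (sub i).map a.mkQ, ∀ v ∈ (sub j).map a.mkQ,
          α u v ∈ dualSub K (V ⧸ a) (fun i => (sub i).map a.mkQ) (Bool.xor i j))
      ∧ (∀ i j : Bool, ∀ u ∈ (sub i).map a.mkQ, ∀ v ∈ (sub j).map a.mkQ,
          α v u = -(ssign K i j • α u v))
      ∧ (∀ i j k : Bool, ∀ u ∈ (sub i).map a.mkQ, ∀ v ∈ (sub j).map a.mkQ,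
          ∀ w ∈ (sub k).map a.mkQ,
          -(ssign K i (Bool.xor j k)) • ((α v w).comp (conn u))
            - ssign K i j • (-(ssign K j (Bool.xor i k)) • ((α u w).comp (conn v)))
            + (ssign K k i * ssign K k j) •
                (-(ssign K k (Bool.xor i j)) • ((α u v).comp (conn w)))
            - α (brH u v) w + ssign K j k • α (brH u w) v + α u (brH v w) = 0)
      ∧ (∀ i j k : Bool, ∀ u ∈ (sub i).map a.mkQ, ∀ v ∈ (sub j).map a.mkQ,
          ∀ w ∈ (sub k).map a.mkQ,
          ssign K i k * α u v w + ssign K k j * α w u v + ssign K j i * α v w u = 0)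
      -- brG is the bracket of the T*-extension 𝔥 ⊕ 𝔥*
      ∧ IsBilinMap K ((V ⧸ a) × Module.Dual K (V ⧸ a))
          ((V ⧸ a) × Module.Dual K (V ⧸ a)) brG
      ∧ (∀ u v : V ⧸ a, brG (u, 0) (v, 0) = (brH u v, α u v))
      ∧ (∀ i j : Bool, ∀ u ∈ (sub i).map a.mkQ,
          ∀ ξ ∈ dualSub K (V ⧸ a) (fun i => (sub i).map a.mkQ) j,
          brG (u, 0) (0, ξ) = (0, -(ssign K i j) • (ξ.comp (conn u))))
      ∧ (∀ i j : Bool, ∀ u ∈ (sub i).map a.mkQ,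
          ∀ ξ ∈ dualSub K (V ⧸ a) (fun i => (sub i).map a.mkQ) j,
          brG (0, ξ) (u, 0) = (0, ξ.comp (conn u)))
      ∧ (∀ ξ ζ : Module.Dual K (V ⧸ a), brG (0, ξ) (0, ζ) = 0)
      -- ωG is the canonical even form of the T*-extension
      ∧ IsBilinMap K ((V ⧸ a) × Module.Dual K (V ⧸ a)) K ωG
      ∧ (∀ i i' j j' : Bool, ∀ u ∈ (sub i).map a.mkQ,
          ∀ ξ ∈ dualSub K (V ⧸ a) (fun i => (sub i).map a.mkQ) i',
          ∀ v ∈ (sub j).map a.mkQ,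
          ∀ ζ ∈ dualSub K (V ⧸ a) (fun i => (sub i).map a.mkQ) j',
          ωG (u, ξ) (v, ζ) = ξ v - ssign K j' i * ζ u)
      -- Φ is a linear bijection, given on N by the projection and on 𝔞 by i_ω
      ∧ (∀ x y : V, Φ (x + y) = Φ x + Φ y)
      ∧ (∀ (c : K) (x : V), Φ (c • x) = c • Φ x)
      ∧ Function.Bijective Φ
      ∧ (∀ x ∈ N, Φ x = (a.mkQ x, 0))
      ∧ (∀ p ∈ a, (Φ p).1 = 0 ∧ ∀ u : V, (Φ p).2 (a.mkQ u) = ω p u)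
      -- Φ is an isomorphism of Lie superalgebras carrying ω to ωG
      ∧ (∀ x y : V, Φ (br x y) = brG (Φ x) (Φ y))
      ∧ (∀ x y : V, ωG (Φ x) (Φ y) = ω x y) := by
  have P : IsStrongPolarization K V sub br ω a N :=
    ⟨hLie, hQF, hEven, hcompl, haIdeal, haLag, hNLag⟩
  have hconn' : IsQuotientConnection sub br ω a conn := ⟨hgr, hconn⟩
  exact ⟨P.cocycle, P.tstarBracket, P.tstarForm, P.equiv,
    P.cocycle_isBilinMap,
    fun _ _ _ hu _ hv => P.cocycle_mem_dualSub hchar hu hv,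
    fun _ _ _ hu _ hv => P.cocycle_swap hchar hu hv,
    fun _ _ _ _ hu _ hv _ hw => P.cocycle_isCocycle hchar hconn' hbrH hu hv hw,
    fun _ _ _ _ hu _ hv _ hw => P.cocycle_cyclic hchar hu hv hw,
    P.tstarBracket_isBilinMap,
    P.tstarBracket_mk_zero_mk_zero hbrH,
    fun _ _ _ hu _ hξ => P.tstarBracket_mk_zero_zero_mk hchar hconn' hu hξ,
    fun _ _ _ hu _ hξ => P.tstarBracket_zero_mk_mk_zero hchar hconn' hu hξ,
    P.tstarBracket_zero_mk_zero_mk hchar,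
    P.tstarForm_isBilinMap,
    fun _ _ _ _ _ hu _ _ _ _ _ hζ => P.tstarForm_apply hchar hu hζ,
    map_add P.equiv, map_smul P.equiv, P.equiv.bijective,
    fun x hx => by rw [P.equiv_apply, P.iω_eq_zero_of_mem hx],
    fun p hp => ⟨Submodule.mkQ_eq_zero_iff.mpr hp, P.iω_mkQ_of_mem hp⟩,
    P.equiv_br, P.tstarForm_equiv⟩

/-- (Converse of the `T*`-extension.)  Let `(𝔤, ω, 𝔞, N)` be a
finite-dimensional strongly polarized orthosymplectic quasi-Frobenius Lie superalgebra
(`𝔞` a Lagrangian ideal, `N` a complementary Lagrangian subspace) and let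
`(𝔥 = 𝔤/𝔞, ∇)` be its associated quotient flat Lie superalgebra (where
`ω_𝔥(∇_u v, a) = −(−1)^{p(u)p(v)} ω(ṽ, [ũ, a])`).  Then there is an even super
anti-symmetric 2-cocycle `α` for the dual representation satisfying the cyclic
condition, such that the map `Φ` — given on `N` by the projection `𝔤 → 𝔥` and on `𝔞`
by `a ↦ i_ω(a)`, `i_ω(a)(u) = ω(a, ũ)` — is an isomorphism of Lie superalgebras onto
the `T*`-extension `𝔥 ⊕ 𝔥*` carrying `ω` to the canonical form of the extension. -/
theorem tstar_extension_converse
    (K V : Type*) [Field K] [AddCommGroup V] [Module K V] [FiniteDimensional K V]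
    (hchar : ringChar K ≠ 2)
    (sub : Bool → Submodule K V) (br : V → V → V) (ω : V → V → K)
    (hLie : IsLieSuperAlg K V sub br)
    (hQF : IsQuasiFrobenius K V sub br ω)
    (hEven : IsEvenForm K V sub ω)
    -- the strong polarization (𝔞, N)
    (a N : Submodule K V)
    (hcompl : IsCompl a N)
    (haIdeal : ∀ g : V, ∀ p ∈ a, br g p ∈ a ∧ br p g ∈ a)
    (haLag : ∀ v : V, v ∈ a ↔ ∀ w ∈ a, ω v w = 0)
    (hNLag : ∀ v : V, v ∈ N ↔ ∀ w ∈ N, ω v w = 0)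
    -- the quotient Lie superalgebra 𝔥 = 𝔤/𝔞 with the induced grading and bracket
    (brH : (V ⧸ a) → (V ⧸ a) → (V ⧸ a))
    (hbrH : ∀ x y : V, brH (a.mkQ x) (a.mkQ y) = a.mkQ (br x y))
    (hLieH : IsLieSuperAlg K (V ⧸ a) (fun i => (sub i).map a.mkQ) brH)
    -- the associated flat torsion-free connection ∇ on 𝔥
    (conn : (V ⧸ a) →ₗ[K] (V ⧸ a) →ₗ[K] (V ⧸ a))
    (hgr : ∀ i j : Bool, ∀ u ∈ (sub i).map a.mkQ, ∀ v ∈ (sub j).map a.mkQ,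
      conn u v ∈ (sub (Bool.xor i j)).map a.mkQ)
    (hTF : ∀ i j : Bool, ∀ u ∈ (sub i).map a.mkQ, ∀ v ∈ (sub j).map a.mkQ,
      conn u v - ssign K i j • conn v u = brH u v)
    (hFlat : ∀ i j : Bool, ∀ u ∈ (sub i).map a.mkQ, ∀ v ∈ (sub j).map a.mkQ,
      ∀ w : V ⧸ a,
      conn u (conn v w) - ssign K i j • conn v (conn u w) = conn (brH u v) w)
    (hconn : ∀ (i j : Bool) (u v : V), u ∈ sub i → v ∈ sub j →
      ∀ z : V, a.mkQ z = conn (a.mkQ u) (a.mkQ v) →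
        ∀ c ∈ a, ω z c = -(ssign K i j * ω v (br u c))) :
    ∃ (α : (V ⧸ a) → (V ⧸ a) → Module.Dual K (V ⧸ a))
      (brG : (V ⧸ a) × Module.Dual K (V ⧸ a) → (V ⧸ a) × Module.Dual K (V ⧸ a) →
        (V ⧸ a) × Module.Dual K (V ⧸ a))
      (ωG : (V ⧸ a) × Module.Dual K (V ⧸ a) → (V ⧸ a) × Module.Dual K (V ⧸ a) → K)
      (Φ : V → (V ⧸ a) × Module.Dual K (V ⧸ a)),
      -- α is an even super anti-symmetric 2-cocycle for the dual representation,
      -- satisfying the cyclic condition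
      IsBilinMap K (V ⧸ a) (Module.Dual K (V ⧸ a)) α
      ∧ (∀ i j : Bool, ∀ u ∈ (sub i).map a.mkQ, ∀ v ∈ (sub j).map a.mkQ,
          α u v ∈ dualSub K (V ⧸ a) (fun i => (sub i).map a.mkQ) (Bool.xor i j))
      ∧ (∀ i j : Bool, ∀ u ∈ (sub i).map a.mkQ, ∀ v ∈ (sub j).map a.mkQ,
          α v u = -(ssign K i j • α u v))
      ∧ (∀ i j k : Bool, ∀ u ∈ (sub i).map a.mkQ, ∀ v ∈ (sub j).map a.mkQ,
          ∀ w ∈ (sub k).map a.mkQ,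
          -(ssign K i (Bool.xor j k)) • ((α v w).comp (conn u))
            - ssign K i j • (-(ssign K j (Bool.xor i k)) • ((α u w).comp (conn v)))
            + (ssign K k i * ssign K k j) •
                (-(ssign K k (Bool.xor i j)) • ((α u v).comp (conn w)))
            - α (brH u v) w + ssign K j k • α (brH u w) v + α u (brH v w) = 0)
      ∧ (∀ i j k : Bool, ∀ u ∈ (sub i).map a.mkQ, ∀ v ∈ (sub j).map a.mkQ,
          ∀ w ∈ (sub k).map a.mkQ,
          ssign K i k * α u v w + ssign K k j * α w u v + ssign K j i * α v w u = 0)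
      -- brG is the bracket of the T*-extension 𝔥 ⊕ 𝔥*
      ∧ IsBilinMap K ((V ⧸ a) × Module.Dual K (V ⧸ a))
          ((V ⧸ a) × Module.Dual K (V ⧸ a)) brG
      ∧ (∀ u v : V ⧸ a, brG (u, 0) (v, 0) = (brH u v, α u v))
      ∧ (∀ i j : Bool, ∀ u ∈ (sub i).map a.mkQ,
          ∀ ξ ∈ dualSub K (V ⧸ a) (fun i => (sub i).map a.mkQ) j,
          brG (u, 0) (0, ξ) = (0, -(ssign K i j) • (ξ.comp (conn u))))
      ∧ (∀ i j : Bool, ∀ u ∈ (sub i).map a.mkQ,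
          ∀ ξ ∈ dualSub K (V ⧸ a) (fun i => (sub i).map a.mkQ) j,
          brG (0, ξ) (u, 0) = (0, ξ.comp (conn u)))
      ∧ (∀ ξ ζ : Module.Dual K (V ⧸ a), brG (0, ξ) (0, ζ) = 0)
      -- ωG is the canonical even form of the T*-extension
      ∧ IsBilinMap K ((V ⧸ a) × Module.Dual K (V ⧸ a)) K ωG
      ∧ (∀ i i' j j' : Bool, ∀ u ∈ (sub i).map a.mkQ,
          ∀ ξ ∈ dualSub K (V ⧸ a) (fun i => (sub i).map a.mkQ) i',
          ∀ v ∈ (sub j).map a.mkQ,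
          ∀ ζ ∈ dualSub K (V ⧸ a) (fun i => (sub i).map a.mkQ) j',
          ωG (u, ξ) (v, ζ) = ξ v - ssign K j' i * ζ u)
      -- Φ is a linear bijection, given on N by the projection and on 𝔞 by i_ω
      ∧ (∀ x y : V, Φ (x + y) = Φ x + Φ y)
      ∧ (∀ (c : K) (x : V), Φ (c • x) = c • Φ x)
      ∧ Function.Bijective Φ
      ∧ (∀ x ∈ N, Φ x = (a.mkQ x, 0))
      ∧ (∀ p ∈ a, (Φ p).1 = 0 ∧ ∀ u : V, (Φ p).2 (a.mkQ u) = ω p u)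
      -- Φ is an isomorphism of Lie superalgebras carrying ω to ωG
      ∧ (∀ x y : V, Φ (br x y) = brG (Φ x) (Φ y))
      ∧ (∀ x y : V, ωG (Φ x) (Φ y) = ω x y) :=
  tstar_extension_converse_general K V hchar sub br ω hLie hQF hEven a N hcompl haIdeal haLag hNLag
    brH hbrH conn hgr hconn
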